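/- Let φ₁ : ℝ → ℝ be continuous satisfying ψ(t,t₀) := exp(∫_{t₀}^t (1-φ₁(s)²) ds) ≤ K e^{-α(t-t₀)} for t ≥ t₀ with K ≥ 1, α > 0, and let b > 0, 0 < ε < α/b. Then the 2×2 matrix Ψ(t,t₀) with entries Ψ₁₁ = ψ(t,t₀), Ψ₁₂ = 0, Ψ₂₁ = -ε ∫_{t₀}^t e^{-bε(t-s)} ψ(s,t₀) ds, Ψ₂₂ = e^{-bε(t-t₀)} is the principal matrix solution at t₀ of the linear system ż = A(t)z with A(t) = [[1-φ₁(t)², 0], [-ε, -bε]], and there is a constant K' such that ‖Ψ(t,t₀)‖∞ ≤ K' e^{-bε(t-t₀)} for all t ≥ t₀. -/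

import Mathlib

open MeasureTheory

/-- `ψ(t,t₀) = exp(∫_{t₀}^t (1-φ₁(s)²) ds)`. -/
noncomputable def psiS (φ₁ : ℝ → ℝ) (t t₀ : ℝ) : ℝ :=
  Real.exp (∫ s in t₀..t, (1 - (φ₁ s) ^ 2))

/-- The principal matrix solution of the variational equation along the pullback
solution of the skewed FitzHugh–Nagumo system. -/
noncomputable def PsiM (φ₁ : ℝ → ℝ) (b ε : ℝ) (t t₀ : ℝ) : Matrix (Fin 2) (Fin 2) ℝ :=
  !![psiS φ₁ t t₀, 0;
     -ε * ∫ s in t₀..t, Real.exp (-(b * ε) * (t - s)) * psiS φ₁ s t₀,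
     Real.exp (-(b * ε) * (t - t₀))]

/-- The coefficient matrix `A(t) = [[1-φ₁(t)², 0], [-ε, -bε]]`. -/
noncomputable def Amat (φ₁ : ℝ → ℝ) (b ε : ℝ) (t : ℝ) : Matrix (Fin 2) (Fin 2) ℝ :=
  !![1 - (φ₁ t) ^ 2, 0; -ε, -(b * ε)]

private lemma hasDerivAt_psiS (φ₁ : ℝ → ℝ) (hc : Continuous φ₁) (t₀ t : ℝ) :
    HasDerivAt (fun u => psiS φ₁ u t₀) ((1 - φ₁ t ^ 2) * psiS φ₁ t t₀) t := by
  have hg : Continuous fun s : ℝ => 1 - φ₁ s ^ 2 := by continuity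
  have h1 : HasDerivAt (fun u => ∫ s in t₀..u, (1 - φ₁ s ^ 2)) (1 - φ₁ t ^ 2) t :=
    intervalIntegral.integral_hasDerivAt_right (hg.intervalIntegrable _ _)
      (hg.stronglyMeasurableAtFilter _ _) hg.continuousAt
  simpa [psiS, mul_comm] using h1.exp

private lemma continuous_psiS (φ₁ : ℝ → ℝ) (hc : Continuous φ₁) (t₀ : ℝ) :
    Continuous fun s => psiS φ₁ s t₀ :=
  continuous_iff_continuousAt.mpr fun t => (hasDerivAt_psiS φ₁ hc t₀ t).continuousAt

private lemma psiM10_eq (φ₁ : ℝ → ℝ) (b ε t₀ : ℝ) (u : ℝ) :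
    (-ε * ∫ s in t₀..u, Real.exp (-(b * ε) * (u - s)) * psiS φ₁ s t₀)
      = -ε * (Real.exp (-(b * ε) * u) *
          ∫ s in t₀..u, Real.exp ((b * ε) * s) * psiS φ₁ s t₀) := by
  have h : ∫ s in t₀..u, Real.exp (-(b * ε) * (u - s)) * psiS φ₁ s t₀
      = ∫ s in t₀..u, Real.exp (-(b * ε) * u) * (Real.exp ((b * ε) * s) * psiS φ₁ s t₀) := by
    apply intervalIntegral.integral_congr
    intro s _
    simp only
    rw [← mul_assoc, ← Real.exp_add]
    ring_nf
  rw [h, intervalIntegral.integral_const_mul]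

private lemma integral_exp_decay_le (c a t : ℝ) (hc : 0 < c) (_hat : a ≤ t) :
    ∫ s in a..t, Real.exp (-c * (s - a)) ≤ 1 / c := by
  have hder : ∀ s ∈ Set.uIcc a t,
      HasDerivAt (fun u => -(1/c) * Real.exp (-c * (u - a))) (Real.exp (-c * (s - a))) s := by
    intro s _
    have h1 : HasDerivAt (fun u : ℝ => -c * (u - a)) (-c) s := by
      simpa using ((hasDerivAt_id s).sub_const a).const_mul (-c)
    have h2 := h1.exp.const_mul (-(1/c))
    refine h2.congr_deriv ?_
    rw [mul_comm (Real.exp _) (-c), ← mul_assoc, neg_mul_neg, one_div, inv_mul_cancel₀ hc.ne', one_mul]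
  have hint : IntervalIntegrable (fun s => Real.exp (-c * (s - a))) volume a t :=
    (by continuity : Continuous fun s => Real.exp (-c * (s - a))).intervalIntegrable _ _
  rw [intervalIntegral.integral_eq_sub_of_hasDerivAt hder hint]
  have h0 : (0:ℝ) < Real.exp (-c * (t - a)) := Real.exp_pos _
  have h1 : Real.exp (-c * (a - a)) = 1 := by simp
  rw [h1]
  rw [div_eq_mul_inv, one_mul]
  nlinarith [mul_pos (inv_pos.mpr hc) h0]

private lemma opNorm_fin_two_le (M : Matrix (Fin 2) (Fin 2) ℝ) (C : ℝ) (hC : 0 ≤ C)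
    (h : ∀ i, |M i 0| + |M i 1| ≤ C) :
    ‖(M.toLin').toContinuousLinearMap‖ ≤ C := by
  apply ContinuousLinearMap.opNorm_le_bound _ hC
  intro x
  have hxn : (0:ℝ) ≤ ‖x‖ := norm_nonneg x
  rw [pi_norm_le_iff_of_nonneg (by positivity)]
  intro i
  have hx0 := norm_le_pi_norm x 0
  have hx1 := norm_le_pi_norm x 1
  simp only [LinearMap.coe_toContinuousLinearMap', Matrix.toLin'_apply, Matrix.mulVec,
    dotProduct, Fin.sum_univ_two, Real.norm_eq_abs] at *
  have := h i
  calc |M i 0 * x 0 + M i 1 * x 1| ≤ |M i 0| * |x 0| + |M i 1| * |x 1| := by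
        refine (abs_add_le _ _).trans ?_
        simp [abs_mul]
    _ ≤ (|M i 0| + |M i 1|) * ‖x‖ := by
        nlinarith [abs_nonneg (M i 0), abs_nonneg (M i 1), abs_nonneg (x 0), abs_nonneg (x 1)]
    _ ≤ C * ‖x‖ := by nlinarith

/-- The matrix `Ψ(t,t₀)` is the principal matrix solution at `t₀` of
`ż = A(t)z`, and it decays like `e^{-bε(t-t₀)}` in the operator norm induced by
the maximum norm on `ℝ²`. -/
theorem variational_principal_solution_decay
    (φ₁ : ℝ → ℝ) (hφ₁_cont : Continuous φ₁)
    (K α : ℝ) (hK : 1 ≤ K) (hα : 0 < α)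
    (hψ : ∀ t₀ t, t₀ ≤ t → psiS φ₁ t t₀ ≤ K * Real.exp (-α * (t - t₀)))
    (b ε : ℝ) (hb : 0 < b) (hε : 0 < ε) (hεα : ε < α / b) :
    (∀ t₀, PsiM φ₁ b ε t₀ t₀ = 1) ∧
    (∀ t₀ t (i j : Fin 2),
      HasDerivAt (fun u => PsiM φ₁ b ε u t₀ i j)
        ((Amat φ₁ b ε t * PsiM φ₁ b ε t t₀) i j) t) ∧
    (∃ K' : ℝ, 0 < K' ∧ ∀ t₀ t, t₀ ≤ t →
      ‖((PsiM φ₁ b ε t t₀).toLin').toContinuousLinearMap‖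
        ≤ K' * Real.exp (-(b * ε) * (t - t₀))) := by
  have hcα : b * ε < α := by
    have := (lt_div_iff₀' hb).mp hεα
    linarith
  have hc0 : 0 < b * ε := by positivity
  refine ⟨?_, ?_, ?_⟩
  · intro t₀
    simp [PsiM, psiS, Matrix.one_fin_two]
  · intro t₀ t i j
    have hψc := continuous_psiS φ₁ hφ₁_cont t₀
    fin_cases i <;> fin_cases j <;>
      simp only [PsiM, Amat, Matrix.mul_fin_two, mul_zero, zero_mul, add_zero, zero_add]
    · show HasDerivAt (fun u => psiS φ₁ u t₀) ((1 - φ₁ t ^ 2) * psiS φ₁ t t₀) t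
      exact hasDerivAt_psiS φ₁ hφ₁_cont t₀ t
    · show HasDerivAt (fun _ => (0:ℝ)) 0 t
      exact hasDerivAt_const t 0
    · show HasDerivAt (fun u => -ε * ∫ s in t₀..u, Real.exp (-(b*ε)*(u-s)) * psiS φ₁ s t₀)
        (-ε * psiS φ₁ t t₀
          + -(b*ε) * (-ε * ∫ s in t₀..t, Real.exp (-(b*ε)*(t-s)) * psiS φ₁ s t₀)) t
      have hcont : Continuous fun s => Real.exp ((b * ε) * s) * psiS φ₁ s t₀ :=
        (Real.continuous_exp.comp (continuous_const.mul continuous_id)).mul hψc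
      have hH : HasDerivAt (fun u => ∫ s in t₀..u, Real.exp ((b * ε) * s) * psiS φ₁ s t₀)
          (Real.exp ((b * ε) * t) * psiS φ₁ t t₀) t :=
        intervalIntegral.integral_hasDerivAt_right (hcont.intervalIntegrable _ _)
          (hcont.stronglyMeasurableAtFilter _ _) hcont.continuousAt
      have hE : HasDerivAt (fun u => Real.exp (-(b * ε) * u))
          (Real.exp (-(b * ε) * t) * (-(b * ε) * 1)) t :=
        (((hasDerivAt_id t).const_mul (-(b * ε)))).exp
      have hprod := (hE.mul hH).const_mul (-ε)
      have heq : (fun u => -ε * ∫ s in t₀..u, Real.exp (-(b * ε) * (u - s)) * psiS φ₁ s t₀)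
          = fun u => -ε * (Real.exp (-(b * ε) * u) *
              ∫ s in t₀..u, Real.exp ((b * ε) * s) * psiS φ₁ s t₀) :=
        funext (psiM10_eq φ₁ b ε t₀)
      rw [heq, psiM10_eq φ₁ b ε t₀ t]
      have hee : Real.exp (-(b * ε) * t) * Real.exp ((b * ε) * t) = 1 := by
        rw [← Real.exp_add]; norm_num
      refine hprod.congr_deriv ?_
      linear_combination (-(ε * psiS φ₁ t t₀)) * hee
    · show HasDerivAt (fun u => Real.exp (-(b*ε)*(u - t₀)))
        (-(b*ε) * Real.exp (-(b*ε)*(t - t₀))) t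
      have h := (((hasDerivAt_id t).sub_const t₀).const_mul (-(b * ε))).exp
      refine h.congr_deriv ?_
      simp [mul_comm]
  · have h1 : 0 < α - b * ε := by linarith
    refine ⟨K + ε * K / (α - b * ε) + 1, by positivity, ?_⟩
    intro t₀ t ht
    have hE0 : 0 < Real.exp (-(b * ε) * (t - t₀)) := Real.exp_pos _
    apply opNorm_fin_two_le _ _ (by positivity)
    intro i
    have hIle : (∫ s in t₀..t, Real.exp (-(b * ε) * (t - s)) * psiS φ₁ s t₀)
        ≤ K * Real.exp (-(b * ε) * (t - t₀)) * (1 / (α - b * ε)) := by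
      have hmono : (∫ s in t₀..t, Real.exp (-(b * ε) * (t - s)) * psiS φ₁ s t₀)
          ≤ ∫ s in t₀..t,
              K * Real.exp (-(b * ε) * (t - t₀)) * Real.exp (-(α - b * ε) * (s - t₀)) := by
        apply intervalIntegral.integral_mono_on ht
        · exact ((Real.continuous_exp.comp (by continuity)).mul
            (continuous_psiS φ₁ hφ₁_cont t₀)).intervalIntegrable _ _
        · exact (continuous_const.mul
            (Real.continuous_exp.comp (by continuity))).intervalIntegrable _ _
        · intro s hs
          have h2 : psiS φ₁ s t₀ ≤ K * Real.exp (-α * (s - t₀)) := hψ t₀ s hs.1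
          have h3 : Real.exp (-(b * ε) * (t - s)) * Real.exp (-α * (s - t₀))
              = Real.exp (-(b * ε) * (t - t₀)) * Real.exp (-(α - b * ε) * (s - t₀)) := by
            rw [← Real.exp_add, ← Real.exp_add]; ring_nf
          have h4 : (0:ℝ) < Real.exp (-(b * ε) * (t - s)) := Real.exp_pos _
          nlinarith [mul_le_mul_of_nonneg_left h2 h4.le]
      have hdec : (∫ s in t₀..t, Real.exp (-(α - b * ε) * (s - t₀))) ≤ 1 / (α - b * ε) :=
        integral_exp_decay_le (α - b * ε) t₀ t h1 ht
      rw [intervalIntegral.integral_const_mul] at hmono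
      have hKE : (0:ℝ) ≤ K * Real.exp (-(b * ε) * (t - t₀)) := by positivity
      nlinarith
    have hI0 : (0:ℝ) ≤ ∫ s in t₀..t, Real.exp (-(b * ε) * (t - s)) * psiS φ₁ s t₀ :=
      intervalIntegral.integral_nonneg ht
        (fun s _ => mul_nonneg (Real.exp_pos _).le (Real.exp_pos _).le)
    have hd0 : (0:ℝ) ≤ ε * K / (α - b * ε) := by positivity
    fin_cases i
    · show |psiS φ₁ t t₀| + |(0:ℝ)|
        ≤ (K + ε * K / (α - b * ε) + 1) * Real.exp (-(b * ε) * (t - t₀))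
      have hp : (0:ℝ) < psiS φ₁ t t₀ := Real.exp_pos _
      rw [abs_of_pos hp, abs_zero, add_zero]
      have h5 : psiS φ₁ t t₀ ≤ K * Real.exp (-α * (t - t₀)) := hψ t₀ t ht
      have h6 : Real.exp (-α * (t - t₀)) ≤ Real.exp (-(b * ε) * (t - t₀)) := by
        apply Real.exp_le_exp.mpr
        nlinarith
      have h7 : K * Real.exp (-α * (t - t₀)) ≤ K * Real.exp (-(b * ε) * (t - t₀)) :=
        mul_le_mul_of_nonneg_left h6 (by linarith)
      nlinarith
    · show |(-ε * ∫ s in t₀..t, Real.exp (-(b * ε) * (t - s)) * psiS φ₁ s t₀)|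
          + |Real.exp (-(b * ε) * (t - t₀))|
        ≤ (K + ε * K / (α - b * ε) + 1) * Real.exp (-(b * ε) * (t - t₀))
      have habs : |(-ε * ∫ s in t₀..t, Real.exp (-(b * ε) * (t - s)) * psiS φ₁ s t₀)|
          = ε * ∫ s in t₀..t, Real.exp (-(b * ε) * (t - s)) * psiS φ₁ s t₀ := by
        rw [abs_of_nonpos (by nlinarith)]; ring
      rw [habs, abs_of_pos hE0]
      have h8 := mul_le_mul_of_nonneg_left hIle hε.le
      have h9 : ε * (K * Real.exp (-(b * ε) * (t - t₀)) * (1 / (α - b * ε)))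
          = ε * K / (α - b * ε) * Real.exp (-(b * ε) * (t - t₀)) := by
        field_simp
      nlinarith [mul_pos (lt_of_lt_of_le one_pos hK) hE0]
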